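/- Let n ≥ 2 and m ≥ 2. The family of vectors {v^{(k)}}, where k ranges over all multi-indices in {1,…,m}^n having at least two components strictly less than m, is linearly independent in ℝ^({1,…,m}^n). -/
import Mathlib


open Matrix Finset

/-- The outcome labeled `m` in 1-based labels: the last element of `Fin m`. -/
def lastIdx {m : ℕ} (hm : 0 < m) : Fin m := ⟨m - 1, by omega⟩

/-- The vector `v^(k)` with entries
`v^(k)_i = δ_{i,k} − Σ_x δ_{i,(m,…,m,k_x,m,…,m)} + (n−1)·δ_{i,(m,…,m)}`. -/
noncomputable def vvec {n m : ℕ} (hm : 0 < m) (k : Fin n → Fin m) :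
    (Fin n → Fin m) → ℝ := fun i =>
  (if i = k then 1 else 0)
  - ∑ x : Fin n,
      (if i = Function.update (fun _ => lastIdx hm) x (k x) then 1 else 0)
  + ((n : ℝ) - 1) * (if i = (fun _ => lastIdx hm) then 1 else 0)

lemma vvec_eval {n m : ℕ} (hm : 0 < m) (k k' : Fin n → Fin m)
    (h : 2 ≤ (univ.filter fun x => k' x < lastIdx hm).card) :
    vvec hm k k' = if k' = k then 1 else 0 := by
  have h1 : ∀ x : Fin n, k' ≠ Function.update (fun _ => lastIdx hm) x (k x) := by
    intro x hx
    have hsub : (univ.filter fun y => k' y < lastIdx hm) ⊆ {x} := by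
      intro y hy
      simp only [mem_filter] at hy
      simp only [mem_singleton]
      by_contra hne
      rw [hx, Function.update_of_ne hne] at hy
      exact lt_irrefl _ hy.2
    have := Finset.card_le_card hsub
    simp only [Finset.card_singleton] at this
    omega
  have h2 : k' ≠ fun _ => lastIdx hm := by
    intro hx
    rw [hx] at h
    simp at h
  unfold vvec
  simp [h1, h2]

/-- the family of vectors `v^(k)`, for `k` ranging over multi-indices
with at least two components strictly less than `m`, is linearly independent. -/
theorem stmt5 (n m : ℕ) (hn : 2 ≤ n) (hm : 2 ≤ m) :
    LinearIndependent ℝ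
      (fun k : {k : Fin n → Fin m //
          2 ≤ (univ.filter fun x => k x < lastIdx (show 0 < m by omega)).card} =>
        vvec (show 0 < m by omega) k.val) := by
  rw [Fintype.linearIndependent_iff]
  intro g hg k'
  have h0 := congrFun hg k'.val
  simp only [Finset.sum_apply, Pi.smul_apply, smul_eq_mul, Pi.zero_apply] at h0
  have hrw : ∀ k : {k : Fin n → Fin m //
      2 ≤ (univ.filter fun x => k x < lastIdx (show 0 < m by omega)).card},
      vvec (show 0 < m by omega) k.val k'.val = if k' = k then 1 else 0 := by
    intro k
    rw [vvec_eval _ _ _ k'.property]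
    congr 1
    simp [Subtype.ext_iff]
  rw [Finset.sum_congr rfl (fun k _ => by rw [hrw k])] at h0
  simpa using h0
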